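/- Let R be a commutative ring with 1, let M be a free R-module of rank 2 with basis {x, y}, and let k ≥ 1. Then the canonical map φ_{k,2} : Sym^k(⋀²M) → Sym²(Sym^k M) satisfies φ_{k,2}((x∧y)^k) = Σ_{i=1}^{k} (−1)^{k−i}·C(k−1, i−1)·(x^i·y^{k−i})·(x^{k−i}·y^i), where x^i·y^{k−i} denotes the product of i copies of x and k−i copies of y in Sym^k M, (x∧y)^k the k-th power of x∧y in Sym^k(⋀²M), and C(k−1,i−1) = (k−1)!/((k−i)!·(i−1)!). -/

import Mathlib

open scoped TensorProduct

/-- The submodule of relations defining the symmetric power: differences of pure tensors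
related by a permutation of the factors. -/
def symRel (R : Type*) [CommRing R] (n : ℕ) (M : Type*) [AddCommGroup M] [Module R M] :
    Submodule R (⨂[R]^n M) :=
  Submodule.span R {x | ∃ (σ : Equiv.Perm (Fin n)) (v : Fin n → M),
    x = PiTensorProduct.tprod R v - PiTensorProduct.tprod R (v ∘ σ)}

/-- The `n`-th symmetric power of the `R`-module `M`: the quotient of the `n`-fold tensor
power by the permutation action of the symmetric group. -/
def SymPow (R : Type*) [CommRing R] (n : ℕ) (M : Type*) [AddCommGroup M] [Module R M] :=
  (⨂[R]^n M) ⧸ symRel R n M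

noncomputable instance (R : Type*) [CommRing R] (n : ℕ) (M : Type*) [AddCommGroup M] [Module R M] :
    AddCommGroup (SymPow R n M) :=
  inferInstanceAs (AddCommGroup ((⨂[R]^n M) ⧸ symRel R n M))

noncomputable instance (R : Type*) [CommRing R] (n : ℕ) (M : Type*) [AddCommGroup M] [Module R M] :
    Module R (SymPow R n M) :=
  inferInstanceAs (Module R ((⨂[R]^n M) ⧸ symRel R n M))

/-- The canonical quotient map from the tensor power to the symmetric power. -/
noncomputable def SymPow.mk (R : Type*) [CommRing R] (n : ℕ) (M : Type*) [AddCommGroup M] [Module R M] :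
    (⨂[R]^n M) →ₗ[R] SymPow R n M :=
  (symRel R n M).mkQ

/-- The product `v 0 · v 1 · ⋯ · v (n-1)` in the symmetric power `SymPow R n M`. -/
noncomputable def SymPow.prod (R : Type*) [CommRing R] {n : ℕ} {M : Type*} [AddCommGroup M] [Module R M]
    (v : Fin n → M) : SymPow R n M :=
  SymPow.mk R n M (PiTensorProduct.tprod R v)

/-- The wedge `v 0 ∧ v 1 ∧ ⋯ ∧ v (n-1)`, as an element of the `n`-th exterior power
`⋀[R]^n M`. -/
noncomputable def wedgeMk (R : Type*) [CommRing R] {n : ℕ} {M : Type*} [AddCommGroup M] [Module R M]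
    (v : Fin n → M) : ⋀[R]^n M :=
  ⟨ExteriorAlgebra.ιMulti R n v, ExteriorAlgebra.ιMulti_range R n (Set.mem_range_self v)⟩


/-!
A family `τ : Fin k → S₂` is determined by the set `S` of indices with `τ j = 1`, and the
condition `τ 0 = 1` says `0 ∈ S`. For `a j = (x, y)` the `τ`-term of `φ` is
`(-1)^(k - #S)` times the product of `∏_{j ∈ S} x · ∏_{j ∉ S} y` and `∏_{j ∉ S} x · ∏_{j ∈ S} y`,
and by the symmetry of `Sym^k M` these are `x^{#S} y^{k - #S}` and `x^{k - #S} y^{#S}`.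
Grouping by `i = #S`, there are `C(k - 1, i - 1)` sets of size `i` containing `0`.
-/

open Finset Equiv

theorem Finset.exists_perm_apply_mem_iff_of_card_eq {α : Type*} [Fintype α] [DecidableEq α]
    {S T : Finset α} (h : #S = #T) : ∃ σ : Perm α, ∀ j, σ j ∈ S ↔ j ∈ T := by
  have hc : Fintype.card {j // j ∉ T} = Fintype.card {j // j ∉ S} := by
    simp only [Fintype.card_subtype_compl, Fintype.card_coe, h]
  refine ⟨Equiv.subtypeCongr (Finset.equivOfCardEq h.symm) (Fintype.equivOfCardEq hc),
    fun j => ?_⟩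
  by_cases hj : j ∈ T
  · simp [Equiv.subtypeCongr, Equiv.sumCompl_symm_apply_of_pos, hj]
  · simpa [Equiv.subtypeCongr, Equiv.sumCompl_symm_apply_of_neg, hj]
      using (Fintype.equivOfCardEq hc ⟨j, hj⟩).2

section Counting

variable {α : Type*} [Fintype α] [DecidableEq α]

theorem Finset.card_filter_mem_and_card_eq (a : α) {i : ℕ} (hi : 1 ≤ i) :
    #{S : Finset α | a ∈ S ∧ #S = i} = (Fintype.card α - 1).choose (i - 1) := by
  have h := card_filter_powersetCard_subset {a} univ i (subset_univ _) (by simpa using hi)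
  simp only [card_singleton, card_univ, singleton_subset_iff] at h
  rw [← h]
  congr 1
  ext S
  simp [and_comm]

theorem Finset.sum_filter_mem_eq_sum_Icc_choose {β : Type*} [AddCommMonoid β] (a : α)
    (g : ℕ → β) :
    ∑ S : Finset α with a ∈ S, g #S =
      ∑ i ∈ Icc 1 (Fintype.card α), (Fintype.card α - 1).choose (i - 1) • g i := by
  have hmaps : ∀ S ∈ ({S : Finset α | a ∈ S} : Finset _), #S ∈ Icc 1 (Fintype.card α) :=
    fun S hS => mem_Icc.2 ⟨card_pos.2 ⟨a, (mem_filter.1 hS).2⟩, S.card_le_univ⟩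
  rw [← sum_fiberwise_of_maps_to hmaps]
  refine sum_congr rfl fun i hi => ?_
  rw [filter_filter, sum_congr rfl fun S hS => congrArg g (mem_filter.1 hS).2.2, sum_const,
    card_filter_mem_and_card_eq a (mem_Icc.1 hi).1]

end Counting

namespace Equiv.Perm

theorem eq_one_or_eq_swap_zero_one (π : Perm (Fin 2)) : π = 1 ∨ π = swap 0 1 := by
  revert π
  decide

def finTwoFunEquivFinset (α : Type*) [Fintype α] [DecidableEq α] :
    (α → Perm (Fin 2)) ≃ Finset α where
  toFun τ := {j | τ j = 1}
  invFun S j := if j ∈ S then 1 else swap 0 1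
  left_inv τ := funext fun j => by
    rcases (τ j).eq_one_or_eq_swap_zero_one with h | h <;> simp [h]
  right_inv S := by
    ext j
    by_cases j ∈ S <;> simp [*]

theorem prod_sign_finTwoFunEquivFinset_symm {α : Type*} [Fintype α] [DecidableEq α]
    (S : Finset α) :
    ∏ j, (sign (finTwoFunEquivFinset α |>.symm S j) : ℤ) = (-1) ^ (Fintype.card α - #S) := by
  simp [finTwoFunEquivFinset, apply_ite, prod_ite, ← card_compl, ← compl_filter]

end Equiv.Perm

namespace SymPow

variable {R M : Type*} [CommRing R] [AddCommGroup M] [Module R M]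

variable (R) in
noncomputable def monomial (k i : ℕ) (x y : M) : SymPow R k M :=
  SymPow.prod R fun t : Fin k => if (t : ℕ) < i then x else y

theorem prod_comp_perm {n : ℕ} (σ : Perm (Fin n)) (v : Fin n → M) :
    SymPow.prod R (v ∘ σ) = SymPow.prod R v :=
  ((Submodule.Quotient.eq (symRel R n M)).2 (Submodule.subset_span ⟨σ, v, rfl⟩)).symm

theorem prod_ite_mem_of_card_eq {n : ℕ} {S T : Finset (Fin n)} (h : #S = #T) (x y : M) :
    SymPow.prod R (fun j => if j ∈ S then x else y) =
      SymPow.prod R (fun j => if j ∈ T then x else y) := by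
  obtain ⟨σ, hσ⟩ := exists_perm_apply_mem_iff_of_card_eq h
  rw [← prod_comp_perm σ]
  simp only [Function.comp_def, hσ]

theorem prod_ite_mem_eq_monomial {n : ℕ} (S : Finset (Fin n)) (x y : M) :
    SymPow.prod R (fun j => if j ∈ S then x else y) = monomial R n #S x y := by
  have h : #S = #{t : Fin n | (t : ℕ) < #S} := by
    rw [Fin.card_filter_val_lt, min_eq_right (by simpa using S.card_le_univ)]
  simpa [monomial] using prod_ite_mem_of_card_eq h x y

open Equiv.Perm in
theorem sign_smul_prod_finTwoFunEquivFinset_symm {k : ℕ} (x y : M) (S : Finset (Fin k)) :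
    (∏ j, (sign (finTwoFunEquivFinset (Fin k) |>.symm S j) : ℤ)) •
        SymPow.prod R (fun i : Fin 2 =>
          SymPow.prod R fun j => ![x, y] (finTwoFunEquivFinset (Fin k) |>.symm S j i)) =
      (-1 : ℤ) ^ (k - #S) • SymPow.prod R ![monomial R k #S x y, monomial R k (k - #S) x y] := by
  have h0 : (fun j => ![x, y] (finTwoFunEquivFinset (Fin k) |>.symm S j 0)) =
      fun j => if j ∈ S then x else y := by
    funext j
    by_cases hj : j ∈ S <;> simp [finTwoFunEquivFinset, hj]
  have h1 : (fun j => ![x, y] (finTwoFunEquivFinset (Fin k) |>.symm S j 1)) =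
      fun j => if j ∈ Sᶜ then x else y := by
    funext j
    by_cases hj : j ∈ S <;> simp [finTwoFunEquivFinset, hj]
  rw [prod_sign_finTwoFunEquivFinset_symm, Fintype.card_fin]
  congr 2
  funext i
  fin_cases i
  · exact (congrArg _ h0).trans (prod_ite_mem_eq_monomial S x y)
  · refine (congrArg _ h1).trans ((prod_ite_mem_eq_monomial Sᶜ x y).trans ?_)
    rw [card_compl, Fintype.card_fin]
    rfl

end SymPow

theorem stmt7 {R M : Type*} [CommRing R] [AddCommGroup M] [Module R M]
    (b : Module.Basis (Fin 2) R M) (k : ℕ) (hk : 0 < k)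
    (φ : SymPow R k (⋀[R]^2 M) →ₗ[R] SymPow R 2 (SymPow R k M))
    (hφ : ∀ a : Fin k → Fin 2 → M,
      φ (SymPow.prod R fun j : Fin k => wedgeMk R (a j)) =
        ∑ τ ∈ Finset.univ.filter
            (fun τ : Fin k → Equiv.Perm (Fin 2) => τ ⟨0, hk⟩ = 1),
          (∏ j : Fin k, (Equiv.Perm.sign (τ j) : ℤ)) •
            SymPow.prod R (fun i : Fin 2 => SymPow.prod R (fun j : Fin k => a j (τ j i)))) :
    φ (SymPow.prod R fun _ : Fin k => wedgeMk R ![b 0, b 1]) =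
      ∑ i ∈ Finset.Icc 1 k,
        ((-1 : ℤ) ^ (k - i) * ((k - 1).choose (i - 1) : ℤ)) •
          SymPow.prod R
            ![SymPow.prod R (fun t : Fin k => if (t : ℕ) < i then b 0 else b 1),
              SymPow.prod R (fun t : Fin k => if (t : ℕ) < k - i then b 0 else b 1)] := by
  let e := Equiv.Perm.finTwoFunEquivFinset (Fin k)
  rw [hφ, ← sum_equiv e.symm (s := {S | ⟨0, hk⟩ ∈ S})
    (by simp [e, Equiv.Perm.finTwoFunEquivFinset]) (fun _ _ => rfl)]
  simp only [e, SymPow.sign_smul_prod_finTwoFunEquivFinset_symm]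
  rw [sum_filter_mem_eq_sum_Icc_choose _ fun i => (-1 : ℤ) ^ (k - i) •
    SymPow.prod R ![SymPow.monomial R k i (b 0) (b 1), SymPow.monomial R k (k - i) (b 0) (b 1)],
    Fintype.card_fin]
  refine sum_congr rfl fun i _ => ?_
  rw [← natCast_zsmul, smul_smul, mul_comm]
  rfl
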